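/- arXiv:0806.4247 — 4 statements merged into one kernel-verified Lean document; each statement's English description precedes it below -/
import Mathlib

section
/- Let C ∈ (0,1] and u = 2√C ∈ (0,2]. The cubic F(t) = (3C−1)t³ + 6Ct² + (9C−3C²)t + 4C − 2C² is nonnegative on the interval [0, u]. -/
lemma sq_le_four_mul_of_le_two_mul_sqrt {C t : ℝ} (hC : 0 ≤ C) (ht : 0 ≤ t)
    (htu : t ≤ 2 * Real.sqrt C) : t ^ 2 ≤ 4 * C :=
  calc t ^ 2 ≤ (2 * Real.sqrt C) ^ 2 := pow_le_pow_left₀ ht htu 2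
    _ = 4 * C := by rw [mul_pow, Real.sq_sqrt hC]; norm_num

lemma cubic_nonneg_of_sq_le {C t : ℝ} (hC : C ≤ 1) (ht : 0 ≤ t) (hsq : t ^ 2 ≤ 4 * C) :
    0 ≤ (3 * C - 1) * t ^ 3 + 6 * C * t ^ 2 + (9 * C - 3 * C ^ 2) * t
        + 4 * C - 2 * C ^ 2 := by
  have hC0 : 0 ≤ C := by nlinarith [sq_nonneg t]
  -- Rewriting `-t ^ 3` as `t * (4 * C - t ^ 2) - 4 * C * t` makes every term nonnegative.
  have key : (3 * C - 1) * t ^ 3 + 6 * C * t ^ 2 + (9 * C - 3 * C ^ 2) * t + 4 * C - 2 * C ^ 2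
      = 3 * C * t ^ 3 + t * (4 * C - t ^ 2) + 6 * C * t ^ 2 + C * (5 - 3 * C) * t
        + 2 * C * (2 - C) := by ring
  have hgap : 0 ≤ 4 * C - t ^ 2 := sub_nonneg.2 hsq
  have h5 : 0 ≤ 5 - 3 * C := by linarith
  have h2 : 0 ≤ 2 - C := by linarith
  rw [key]
  have hcube : 0 ≤ 3 * C * t ^ 3 := by positivity
  have hsquare : 0 ≤ 6 * C * t ^ 2 := by positivity
  linarith [mul_nonneg ht hgap, mul_nonneg (mul_nonneg hC0 h5) ht,
    mul_nonneg (mul_nonneg zero_le_two hC0) h2]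

/-- For `C ∈ (0,1]` and `u = 2√C`, the cubic
`F(t) = (3C−1)t³ + 6Ct² + (9C−3C²)t + 4C − 2C²` is nonnegative on `[0,u]`. -/
theorem cubic_nonneg (C : ℝ) (hC : C ∈ Set.Ioc (0 : ℝ) 1) (u : ℝ)
    (hu : u = 2 * Real.sqrt C) :
    ∀ t ∈ Set.Icc (0 : ℝ) u,
      0 ≤ (3 * C - 1) * t ^ 3 + 6 * C * t ^ 2 + (9 * C - 3 * C ^ 2) * t
          + 4 * C - 2 * C ^ 2 := by
  rintro t ⟨ht0, htu⟩
  subst hu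
  exact cubic_nonneg_of_sq_le hC.2 ht0
    (sq_le_four_mul_of_le_two_mul_sqrt hC.1.le ht0 htu)
end

section
/- Fix u ∈ (0,2] and an integer m ≥ 1 and set C = u²/4. On the set Ω = {(ν₁,…,ν_m) ∈ ℝ^m : ν_α ≥ 0, ∑ ν_α = u}, the function f(ν) = ∑_α 2ν_α(1+ν_α)²/(3ν_α² + 4ν_α + C) attains its maximum at the barycenter, and sup_Ω f = 2(u+m)²/((3 + m²/4)u + 4m). -/
/-!
The summand `g t = 2t(1+t)²/(3t²+4t+C)` is concave on `[0, u]`: the gap between its tangent line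
at `s` and `g t` is `(t - s)²` times a ratio whose numerator is linear in `t` and nonnegative
as soon as `s, t ∈ [0, u]` and `u ≤ 2`. Summing the tangent-line inequalities at the barycentric
value `s = u/m` over the coordinates of a point of the simplex, the linear terms cancel because
`∑ ν_α = m s`, leaving `f ν ≤ m g(s) = f(u/m, …, u/m)`.
-/

open Finset

noncomputable section

def simplexSummand (C t : ℝ) : ℝ :=
  2 * t * (1 + t) ^ 2 / (3 * t ^ 2 + 4 * t + C)

-- The derivative of `simplexSummand C` at `s`.
def simplexSummandSlope (C s : ℝ) : ℝ :=
  2 * (1 + s) * (3 * s ^ 3 + 5 * s ^ 2 + 3 * C * s + C) / (3 * s ^ 2 + 4 * s + C) ^ 2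

end

theorem sum_le_card_mul_of_le_tangent {ι : Type*} [Fintype ι] (f : ℝ → ℝ) (ν : ι → ℝ)
    (s a : ℝ) (htangent : ∀ i, f (ν i) ≤ f s + a * (ν i - s))
    (hsum : ∑ i, ν i = Fintype.card ι * s) :
    ∑ i, f (ν i) ≤ Fintype.card ι * f s :=
  calc ∑ i, f (ν i) ≤ ∑ i, (f s + a * (ν i - s)) := sum_le_sum fun i _ => htangent i
    _ = Fintype.card ι * f s := by
      simp only [sum_add_distrib, ← mul_sum, sum_sub_distrib, hsum, sum_const, card_univ,
        nsmul_eq_mul]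
      ring

theorem simplexSummand_le_tangent {u s t : ℝ} (hu0 : 0 < u) (hu2 : u ≤ 2) (hs0 : 0 ≤ s)
    (hsu : s ≤ u) (ht0 : 0 ≤ t) (htu : t ≤ u) :
    simplexSummand (u ^ 2 / 4) t ≤
      simplexSummand (u ^ 2 / 4) s + simplexSummandSlope (u ^ 2 / 4) s * (t - s) := by
  set C : ℝ := u ^ 2 / 4 with hC
  have hC0 : 0 < C := by positivity
  have hC1 : C ≤ 1 := by nlinarith
  have hst : s * t ≤ 4 * C := by nlinarith [mul_le_mul hsu htu ht0 hu0.le]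
  have hCt : C * t ≤ 2 := by nlinarith
  set Q := (6 * C - 2 * C ^ 2 + 8 * s * C - 2 * s ^ 2 + 6 * s ^ 2 * C) * t
      + (8 * C - 4 * C ^ 2 + 12 * s * C - 4 * s * C ^ 2 + 4 * s ^ 2 * C)
  have hremainder : simplexSummand C s + simplexSummandSlope C s * (t - s) - simplexSummand C t
      = (t - s) ^ 2 * Q / ((3 * t ^ 2 + 4 * t + C) * (3 * s ^ 2 + 4 * s + C) ^ 2) := by
    unfold simplexSummand simplexSummandSlope
    field_simp
    ring
  have hQ_nonneg : 0 ≤ Q := by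
    have hQ_eq : Q = 2 * C * (2 - C * t) + 2 * s * (4 * C - s * t) + 4 * C * (1 - C)
        + 4 * s * C * (1 - C)
        + (6 * C * t + 8 * s * C * t + 6 * s ^ 2 * C * t + 4 * s ^ 2 * C) := by
      ring
    rw [hQ_eq]
    have h₁ : 0 ≤ 2 * C * (2 - C * t) := mul_nonneg (by positivity) (by linarith)
    have h₂ : 0 ≤ 2 * s * (4 * C - s * t) := mul_nonneg (by positivity) (by linarith)
    have h₃ : 0 ≤ 4 * C * (1 - C) := mul_nonneg (by positivity) (by linarith)
    have h₄ : 0 ≤ 4 * s * C * (1 - C) := mul_nonneg (by positivity) (by linarith)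
    have h₅ : 0 ≤ 6 * C * t + 8 * s * C * t + 6 * s ^ 2 * C * t + 4 * s ^ 2 * C := by positivity
    linarith
  rw [← sub_nonneg, hremainder]
  positivity

theorem card_mul_simplexSummand_barycenter {m : ℕ} (hm : 0 < m) {u : ℝ} (hu0 : 0 < u) :
    m * simplexSummand (u ^ 2 / 4) (u / m) =
      2 * (u + m) ^ 2 / ((3 + (m : ℝ) ^ 2 / 4) * u + 4 * m) := by
  have hm0 : (0 : ℝ) < m := by exact_mod_cast hm
  unfold simplexSummand
  field_simp
  ring

open Finset in
/-- On the simplex `{ν : ν_α ≥ 0, ∑ ν_α = u}` with `u ∈ (0,2]` and `C = u²/4`,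
the function `ν ↦ ∑ 2ν_α(1+ν_α)²/(3ν_α²+4ν_α+C)` attains its maximum
`2(u+m)²/((3+m²/4)u+4m)` (at the barycenter). -/
theorem simplex_max_rational {m : ℕ} (hm : 1 ≤ m) (u : ℝ)
    (hu : u ∈ Set.Ioc (0 : ℝ) 2) :
    IsGreatest
      ((fun ν : Fin m → ℝ =>
          ∑ α, 2 * ν α * (1 + ν α) ^ 2 / (3 * ν α ^ 2 + 4 * ν α + u ^ 2 / 4)) ''
        {ν | (∀ α, 0 ≤ ν α) ∧ ∑ α, ν α = u})
      (2 * (u + m) ^ 2 / ((3 + (m : ℝ) ^ 2 / 4) * u + 4 * m)) := by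
  obtain ⟨hu0, hu2⟩ := hu
  have hm0 : (0 : ℝ) < m := by exact_mod_cast hm
  have hmu : (m : ℝ) * (u / m) = u := mul_div_cancel₀ u hm0.ne'
  rw [← card_mul_simplexSummand_barycenter hm hu0]
  refine ⟨⟨fun _ => u / m, ⟨fun _ => by positivity, by simp [hmu]⟩, by simp [simplexSummand]⟩, ?_⟩
  rintro _ ⟨ν, ⟨hν0, hνsum⟩, rfl⟩
  have hνu : ∀ α, ν α ≤ u := fun α =>
    hνsum ▸ single_le_sum (fun i _ => hν0 i) (mem_univ α)
  have hsu : u / m ≤ u := div_le_self hu0.le (by exact_mod_cast hm)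
  have hbound := sum_le_card_mul_of_le_tangent (simplexSummand (u ^ 2 / 4)) ν (u / m) _
    (fun α => simplexSummand_le_tangent hu0 hu2 (by positivity) hsu (hν0 α) (hνu α))
    (by simp [hνsum, hmu])
  rw [Fintype.card_fin] at hbound
  exact hbound
end

section
/- Let λ₁,…,λ_m ≥ 0 and v = ∏_α(1+λ_α²)^{1/2} with v ∈ (1, 2]. Then ∑_α λ_α²/(v − 1 + λ_α²) ≤ m(v^{2/m} − 1)/(v − 2 + v^{2/m}). -/
/-! With `t_α = log (1 + λ_α²)` the summand is `g t_α` for `g t = (eᵗ - 1) / (eᵗ + v - 2)`,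
and `∑ t_α = 2 log v`. As `-1 < v - 2 ≤ 1`, the derivative `(v - 1) eᵗ / (eᵗ + v - 2)²` of `g`
decreases on `[0, ∞)`, so `g` is concave there and Jensen's inequality bounds the sum by
`m g (2 log v / m)`, which is the right-hand side. -/

open Real Set Finset

lemma ConcaveOn.sum_le_card_mul_map_average {ι : Type*} {s : Set ℝ} {f : ℝ → ℝ}
    (hf : ConcaveOn ℝ s f) (t : Finset ι) {p : ι → ℝ} (hp : ∀ i ∈ t, p i ∈ s) :
    ∑ i ∈ t, f (p i) ≤ #t * f ((∑ i ∈ t, p i) / #t) := by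
  rcases t.eq_empty_or_nonempty with rfl | ht
  · simp
  have hcard : (0 : ℝ) < #t := by exact_mod_cast ht.card_pos
  have h := hf.le_map_centerMass (w := fun _ => 1) (fun _ _ => zero_le_one)
    (by simpa using ht.card_pos) hp
  simp only [centerMass, sum_const, nsmul_eq_mul, mul_one, one_mul, smul_eq_mul,
    Function.comp_apply] at h
  rw [inv_mul_eq_div, inv_mul_eq_div, div_le_iff₀ hcard] at h
  linarith

lemma antitoneOn_div_add_sq {a : ℝ} (ha₀ : -1 < a) (ha₁ : a ≤ 1) :
    AntitoneOn (fun x : ℝ => x / (x + a) ^ 2) (Ici 1) := by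
  intro x (hx : 1 ≤ x) y (hy : 1 ≤ y) hxy
  rw [div_le_div_iff₀ (by nlinarith) (by nlinarith)]
  -- `x (y + a)² - y (x + a)² = (y - x) (x y - a²)`
  nlinarith [mul_nonneg (sub_nonneg.2 hxy) (by nlinarith : 0 ≤ x * y - a ^ 2)]

lemma hasDerivAt_exp_sub_one_div_exp_add {a t : ℝ} (h : exp t + a ≠ 0) :
    HasDerivAt (fun t => (exp t - 1) / (exp t + a))
      ((1 + a) * (exp t / (exp t + a) ^ 2)) t := by
  refine (((hasDerivAt_exp t).sub_const 1).fun_div ((hasDerivAt_exp t).add_const a) h)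
    |>.congr_deriv ?_
  ring

lemma concaveOn_exp_sub_one_div_exp_add {a : ℝ} (ha₀ : -1 < a) (ha₁ : a ≤ 1) :
    ConcaveOn ℝ (Ici 0) fun t => (exp t - 1) / (exp t + a) := by
  have hpos : ∀ t ∈ Ici (0 : ℝ), exp t + a ≠ 0 := fun t (ht : 0 ≤ t) => by
    linarith [one_le_exp ht]
  have hderiv := fun t ht => hasDerivAt_exp_sub_one_div_exp_add (hpos t ht)
  refine AntitoneOn.concaveOn_of_deriv (convex_Ici 0)
    (fun t ht => (hderiv t ht).continuousAt.continuousWithinAt)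
    (fun t ht => (hderiv t (interior_subset ht)).differentiableAt.differentiableWithinAt) ?_
  rw [interior_Ici]
  intro x (hx : 0 < x) y (hy : 0 < y) hxy
  rw [(hderiv x hx.le).deriv, (hderiv y hy.le).deriv]
  exact mul_le_mul_of_nonneg_left (antitoneOn_div_add_sq ha₀ ha₁ (one_le_exp hx.le)
    (one_le_exp hy.le) (exp_le_exp.2 hxy)) (by linarith)

open Finset in
theorem sum_bound_v_general {m : ℕ} (lam : Fin m → ℝ)
    (v : ℝ) (hv : v = Real.sqrt (∏ α, (1 + lam α ^ 2)))
    (hv' : v ∈ Set.Ioc (1 : ℝ) 2) :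
    ∑ α, lam α ^ 2 / (v - 1 + lam α ^ 2) ≤
      (m : ℝ) * (v ^ ((2 : ℝ) / m) - 1) / (v - 2 + v ^ ((2 : ℝ) / m)) := by
  obtain ⟨hv₁, hv₂⟩ := hv'
  have hfac : ∀ α, 0 < 1 + lam α ^ 2 := fun α => by positivity
  have hsum_log : ∑ α, log (1 + lam α ^ 2) = 2 * log v := by
    rw [← log_prod fun α _ => (hfac α).ne', hv, log_sqrt (prod_nonneg fun α _ => (hfac α).le)]
    ring
  have hg_log : ∀ α, (exp (log (1 + lam α ^ 2)) - 1) / (exp (log (1 + lam α ^ 2)) + (v - 2)) =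
      lam α ^ 2 / (v - 1 + lam α ^ 2) := fun α => by
    rw [exp_log (hfac α)]
    ring_nf
  have hexp_mean : exp (2 * log v / m) = v ^ ((2 : ℝ) / m) := by
    rw [rpow_def_of_pos (by linarith)]
    ring_nf
  have h := (concaveOn_exp_sub_one_div_exp_add (a := v - 2) (by linarith) (by linarith))
    |>.sum_le_card_mul_map_average univ (p := fun α => log (1 + lam α ^ 2))
      fun α _ => log_nonneg (le_add_of_nonneg_right (sq_nonneg (lam α)))
  simp only [hg_log, card_univ, Fintype.card_fin, hsum_log, hexp_mean] at h
  rw [mul_div_assoc, add_comm (v - 2)]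
  exact h

open Finset in
/-- If `λ_α ≥ 0` and `v = ∏ (1+λ_α²)^{1/2} ∈ (1,2]`, then
`∑ λ_α²/(v−1+λ_α²) ≤ m(v^{2/m}−1)/(v−2+v^{2/m})`. -/
theorem sum_bound_v {m : ℕ} (lam : Fin m → ℝ) (hlam : ∀ α, 0 ≤ lam α)
    (v : ℝ) (hv : v = Real.sqrt (∏ α, (1 + lam α ^ 2)))
    (hv' : v ∈ Set.Ioc (1 : ℝ) 2) :
    ∑ α, lam α ^ 2 / (v - 1 + lam α ^ 2) ≤
      (m : ℝ) * (v ^ ((2 : ℝ) / m) - 1) / (v - 2 + v ^ ((2 : ℝ) / m)) :=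
  sum_bound_v_general lam v hv hv'
end

section
/- Let λ₁,…,λ_m ≥ 0 and u = ∑_α λ_α² with u ∈ (0,2]. Then ∑_α 2λ_α²(1+λ_α²)²/(3λ_α⁴ + 4λ_α² + u²/4) ≤ 2(u+m)²/((3 + m²/4)u + 4m). -/
/-!
With `ν_α = λ_α²` and `c = u²/4`, each summand is `φ_c(ν_α)` for
`φ_c(ν) = 2ν(1+ν)²/(3ν²+4ν+c)`. On the range `ν·t ≤ 4c` the graph of `φ_c` lies below its
tangent line at `t`; taking `t = u/m` and summing, the linear terms cancel because
`∑ ν_α = m t`, so the sum is at most `m φ_c(u/m)`, which is the right-hand side.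
-/

noncomputable section

namespace SumBound

def phi (c ν : ℝ) : ℝ := 2 * ν * (1 + ν) ^ 2 / (3 * ν ^ 2 + 4 * ν + c)

/-- The derivative of `φ_c` at `t`. -/
def phiSlope (c t : ℝ) : ℝ :=
  2 * (1 + t) * (3 * t ^ 3 + 5 * t ^ 2 + c * (1 + 3 * t)) / (3 * t ^ 2 + 4 * t + c) ^ 2

variable {c t ν : ℝ}

lemma phi_tangent_sub_phi (hc : 0 < c) (ht : 0 ≤ t) (hν : 0 ≤ ν) :
    phi c t + phiSlope c t * (ν - t) - phi c ν =
      (ν - t) ^ 2 * ((-2 * t ^ 2 + 6 * c + 8 * c * t + 6 * c * t ^ 2 - 2 * c ^ 2) * ν +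
          4 * c * (t ^ 2 + 3 * t + 2 - c - c * t)) /
        ((3 * ν ^ 2 + 4 * ν + c) * (3 * t ^ 2 + 4 * t + c) ^ 2) := by
  have : 0 < 3 * ν ^ 2 + 4 * ν + c := by positivity
  have : 0 < 3 * t ^ 2 + 4 * t + c := by positivity
  unfold phi phiSlope
  field_simp
  ring

lemma phi_le_tangent (hc : 0 < c) (hc1 : c ≤ 1) (ht : 0 ≤ t) (hν : 0 ≤ ν)
    (hνt : ν * t ≤ 4 * c) : phi c ν ≤ phi c t + phiSlope c t * (ν - t) := by
  have hnum : 0 ≤ (-2 * t ^ 2 + 6 * c + 8 * c * t + 6 * c * t ^ 2 - 2 * c ^ 2) * ν +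
      4 * c * (t ^ 2 + 3 * t + 2 - c - c * t) := by
    -- `-2t²ν` is absorbed by `2t(4c - νt) ≥ 0`, the `-c²` terms by `c ≤ 1`.
    have h1c : 0 ≤ 1 - c := by linarith
    nlinarith [mul_nonneg ht (by linarith : (0:ℝ) ≤ 4 * c - ν * t),
      mul_nonneg (mul_nonneg hc.le hν) h1c, mul_nonneg hc.le h1c,
      mul_nonneg (mul_nonneg hc.le ht) h1c, mul_nonneg (mul_nonneg hc.le hν) ht,
      mul_nonneg (mul_nonneg (mul_nonneg hc.le hν) ht) ht, mul_nonneg hc.le (mul_nonneg ht ht),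
      mul_nonneg (mul_nonneg hc.le hν) hc.le]
  have : 0 ≤ phi c t + phiSlope c t * (ν - t) - phi c ν := by
    rw [phi_tangent_sub_phi hc ht hν]
    apply div_nonneg (mul_nonneg (sq_nonneg _) hnum)
    positivity
  linarith

open Finset in
lemma sum_phi_le_card_mul_phi_mean {ι : Type*} [Fintype ι] [Nonempty ι] (ν : ι → ℝ)
    (hν : ∀ i, 0 ≤ ν i) (hc : 0 < c) (hc1 : c ≤ 1) (hS : (∑ i, ν i) ^ 2 ≤ 4 * c) :
    ∑ i, phi c (ν i) ≤ Fintype.card ι * phi c ((∑ i, ν i) / Fintype.card ι) := by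
  set S := ∑ i, ν i
  set n : ℝ := (Fintype.card ι : ℝ)
  have hn : 1 ≤ n := Nat.one_le_cast.mpr Fintype.card_pos
  have hS0 : 0 ≤ S := sum_nonneg fun i _ => hν i
  have ht : 0 ≤ S / n := by positivity
  have hνt (i : ι) : ν i * (S / n) ≤ 4 * c :=
    calc ν i * (S / n) ≤ S * S :=
          mul_le_mul (single_le_sum (fun j _ => hν j) (mem_univ i)) (div_le_self hS0 hn) ht hS0
      _ ≤ 4 * c := by nlinarith
  calc ∑ i, phi c (ν i)
      ≤ ∑ i, (phi c (S / n) + phiSlope c (S / n) * (ν i - S / n)) :=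
        sum_le_sum fun i _ => phi_le_tangent hc hc1 ht (hν i) (hνt i)
    _ = n * phi c (S / n) + phiSlope c (S / n) * (S - n * (S / n)) := by
        rw [sum_add_distrib, ← mul_sum, sum_sub_distrib, sum_const, sum_const, card_univ,
          nsmul_eq_mul, nsmul_eq_mul]
    _ = n * phi c (S / n) := by
        rw [mul_div_cancel₀ S (by positivity : n ≠ 0), sub_self, mul_zero, add_zero]

lemma card_mul_phi_mean (m : ℕ) (hm : 0 < m) (u : ℝ) (hu : 0 < u) :
    m * phi (u ^ 2 / 4) (u / m) = 2 * (u + m) ^ 2 / ((3 + (m : ℝ) ^ 2 / 4) * u + 4 * m) := by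
  have hmR : (0 : ℝ) < m := Nat.cast_pos.mpr hm
  have : 0 < 3 * (u / m) ^ 2 + 4 * (u / m) + u ^ 2 / 4 := by positivity
  have : 0 < (3 + (m : ℝ) ^ 2 / 4) * u + 4 * m := by positivity
  unfold phi
  field_simp
  ring

end SumBound

open SumBound in
theorem sum_bound_u_general {m : ℕ} (lam : Fin m → ℝ) (u : ℝ) (hu : u = ∑ α, lam α ^ 2)
    (hu' : u ∈ Set.Ioc (0 : ℝ) 2) :
    ∑ α, 2 * lam α ^ 2 * (1 + lam α ^ 2) ^ 2 /
        (3 * lam α ^ 4 + 4 * lam α ^ 2 + u ^ 2 / 4) ≤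
      2 * (u + m) ^ 2 / ((3 + (m : ℝ) ^ 2 / 4) * u + 4 * m) := by
  obtain ⟨hu0, hu2⟩ := hu'
  have hm : 0 < m := Nat.pos_of_ne_zero <| by rintro rfl; simp [hu] at hu0
  have : Nonempty (Fin m) := Fin.pos_iff_nonempty.mp hm
  have hsum := sum_phi_le_card_mul_phi_mean (c := u ^ 2 / 4) (fun α => lam α ^ 2)
    (fun α => sq_nonneg _) (by positivity) (by nlinarith) (by simp only [← hu]; linarith)
  rw [← hu, Fintype.card_fin, card_mul_phi_mean m hm u hu0] at hsum
  convert hsum using 2 with α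
  unfold phi
  ring

open Finset in
/-- If `λ_α ≥ 0` and `u = ∑ λ_α² ∈ (0,2]`, then
`∑ 2λ_α²(1+λ_α²)²/(3λ_α⁴+4λ_α²+u²/4) ≤ 2(u+m)²/((3+m²/4)u+4m)`. -/
theorem sum_bound_u {m : ℕ} (lam : Fin m → ℝ) (hlam : ∀ α, 0 ≤ lam α)
    (u : ℝ) (hu : u = ∑ α, lam α ^ 2) (hu' : u ∈ Set.Ioc (0 : ℝ) 2) :
    ∑ α, 2 * lam α ^ 2 * (1 + lam α ^ 2) ^ 2 /
        (3 * lam α ^ 4 + 4 * lam α ^ 2 + u ^ 2 / 4) ≤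
      2 * (u + m) ^ 2 / ((3 + (m : ℝ) ^ 2 / 4) * u + 4 * m) :=
  sum_bound_u_general lam u hu hu'
end
end
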